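/- Let p, q ≥ 1 and set n = 1 + p + q. Suppose D_F is a (1+p)×(1+p) matrix and D_H is a (1+q)×(1+q) matrix, written in block form D_F = [[0, a^T],[c, D_{F,x_0}]] and D_H = [[0, b^T],[d, D_{H,x_0}]]. Define the n×n matrix D = [[0, a^T, b^T],[c, D_{F,x_0}, c j^T + j b^T],[d, d j^T + j a^T, D_{H,x_0}]]. Suppose there are vectors α_F (of size 1+p) and α_H (of size 1+q) and reals λ_F, λ_H with α_F^T j = 1, α_H^T j = 1, α_F^T D_F = λ_F j^T, and α_H^T D_H = λ_H j^T. Define α of size n by: α_{x_0} = (α_F)_{x_0} + (α_H)_{x_0} - 1, with the remaining entries taken from the corresponding entries of α_F and α_H. Then α^T j = 1 and α^T D = (λ_F + λ_H) j^T. -/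

import Mathlib

/-!
Compute `αᵀ D` column by column. For a column `v` of `F - x₀`, the rows of `H - x₀` contribute
`∑ᵢ αH i * (d i + a v) = λ_H + (1 - αH x₀) * a v`; the surplus `(1 - αH x₀) * a v` is exactly
cancelled by the `αH x₀ - 1` added to the weight of `x₀`, and what remains is `(αF ᵀ D_F) v = λ_F`.
Columns of `H - x₀` are symmetric, and the column `x₀` is the sum of the two `x₀`-columns.
-/

open Matrix

section CutVertex

variable {R ι κ : Type*} [CommRing R] [Fintype ι] [Fintype κ]

def borderMatrix (a c : ι → R) (M : Matrix ι ι R) : Matrix (Unit ⊕ ι) (Unit ⊕ ι) R :=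
  Matrix.of fun u v =>
    match u, v with
    | Sum.inl _, Sum.inl _ => 0
    | Sum.inl _, Sum.inr j => a j
    | Sum.inr i, Sum.inl _ => c i
    | Sum.inr i, Sum.inr j => M i j

def gluedMatrix (a c : ι → R) (b d : κ → R) (MF : Matrix ι ι R) (MH : Matrix κ κ R) :
    Matrix (Unit ⊕ ι ⊕ κ) (Unit ⊕ ι ⊕ κ) R :=
  Matrix.of fun u v =>
    match u, v with
    | Sum.inl _, Sum.inl _ => 0
    | Sum.inl _, Sum.inr (Sum.inl j) => a j
    | Sum.inl _, Sum.inr (Sum.inr j) => b j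
    | Sum.inr (Sum.inl i), Sum.inl _ => c i
    | Sum.inr (Sum.inl i), Sum.inr (Sum.inl j) => MF i j
    | Sum.inr (Sum.inl i), Sum.inr (Sum.inr j) => c i + b j
    | Sum.inr (Sum.inr i), Sum.inl _ => d i
    | Sum.inr (Sum.inr i), Sum.inr (Sum.inl j) => d i + a j
    | Sum.inr (Sum.inr i), Sum.inr (Sum.inr j) => MH i j

def gluedWeights (αF : Unit ⊕ ι → R) (αH : Unit ⊕ κ → R) : Unit ⊕ ι ⊕ κ → R
  | Sum.inl _ => αF (Sum.inl ()) + αH (Sum.inl ()) - 1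
  | Sum.inr (Sum.inl i) => αF (Sum.inr i)
  | Sum.inr (Sum.inr i) => αH (Sum.inr i)

variable (a c : ι → R) (b d : κ → R) (MF : Matrix ι ι R) (MH : Matrix κ κ R)
  (αF : Unit ⊕ ι → R) (αH : Unit ⊕ κ → R)

theorem sum_gluedWeights :
    ∑ u, gluedWeights αF αH u = (∑ u, αF u) + (∑ u, αH u) - 1 := by
  simp only [Fintype.sum_sum_type, Finset.univ_unique, Finset.sum_singleton, gluedWeights]
  ring

theorem vecMul_borderMatrix_inl :
    vecMul αF (borderMatrix a c MF) (Sum.inl ()) = ∑ i, αF (Sum.inr i) * c i := by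
  simp [vecMul, dotProduct, Fintype.sum_sum_type, borderMatrix]

theorem vecMul_borderMatrix_inr (j : ι) :
    vecMul αF (borderMatrix a c MF) (Sum.inr j) =
      αF (Sum.inl ()) * a j + ∑ i, αF (Sum.inr i) * MF i j := by
  simp [vecMul, dotProduct, Fintype.sum_sum_type, borderMatrix]

theorem vecMul_gluedMatrix_inl :
    vecMul (gluedWeights αF αH) (gluedMatrix a c b d MF MH) (Sum.inl ()) =
      vecMul αF (borderMatrix a c MF) (Sum.inl ()) +
        vecMul αH (borderMatrix b d MH) (Sum.inl ()) := by
  rw [vecMul_borderMatrix_inl, vecMul_borderMatrix_inl]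
  simp [vecMul, dotProduct, Fintype.sum_sum_type, gluedMatrix, gluedWeights]

theorem vecMul_gluedMatrix_inr_inl (j : ι) :
    vecMul (gluedWeights αF αH) (gluedMatrix a c b d MF MH) (Sum.inr (Sum.inl j)) =
      vecMul αF (borderMatrix a c MF) (Sum.inr j) +
        vecMul αH (borderMatrix b d MH) (Sum.inl ()) + ((∑ u, αH u) - 1) * a j := by
  rw [vecMul_borderMatrix_inl, vecMul_borderMatrix_inr]
  simp only [vecMul, dotProduct, Fintype.sum_sum_type, Finset.univ_unique, Finset.sum_singleton,
    gluedMatrix, gluedWeights, Matrix.of_apply, mul_add, Finset.sum_add_distrib, ← Finset.sum_mul]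
  ring

theorem vecMul_gluedMatrix_inr_inr (j : κ) :
    vecMul (gluedWeights αF αH) (gluedMatrix a c b d MF MH) (Sum.inr (Sum.inr j)) =
      vecMul αF (borderMatrix a c MF) (Sum.inl ()) +
        vecMul αH (borderMatrix b d MH) (Sum.inr j) + ((∑ u, αF u) - 1) * b j := by
  rw [vecMul_borderMatrix_inl, vecMul_borderMatrix_inr]
  simp only [vecMul, dotProduct, Fintype.sum_sum_type, Finset.univ_unique, Finset.sum_singleton,
    gluedMatrix, gluedWeights, Matrix.of_apply, mul_add, Finset.sum_add_distrib, ← Finset.sum_mul]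
  ring

theorem vecMul_gluedMatrix_of_vecMul_borderMatrix {lamF lamH : R}
    (hαF1 : ∑ u, αF u = 1) (hαH1 : ∑ u, αH u = 1)
    (hαF : vecMul αF (borderMatrix a c MF) = fun _ => lamF)
    (hαH : vecMul αH (borderMatrix b d MH) = fun _ => lamH) :
    vecMul (gluedWeights αF αH) (gluedMatrix a c b d MF MH) = fun _ => lamF + lamH := by
  funext v
  rcases v with ⟨⟩ | j | j
  · rw [vecMul_gluedMatrix_inl, hαF, hαH]
  · rw [vecMul_gluedMatrix_inr_inl, hαF, hαH, hαH1, sub_self, zero_mul, add_zero]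
  · rw [vecMul_gluedMatrix_inr_inr, hαF, hαH, hαF1, sub_self, zero_mul, add_zero]

end CutVertex

theorem stmt_16 {p q : ℕ}
    (a c : Fin p → ℝ) (b d : Fin q → ℝ)
    (DF0 : Matrix (Fin p) (Fin p) ℝ) (DH0 : Matrix (Fin q) (Fin q) ℝ)
    (DF : Matrix (Unit ⊕ Fin p) (Unit ⊕ Fin p) ℝ)
    (hDF : DF = Matrix.of fun u v =>
      match u, v with
      | Sum.inl _, Sum.inl _ => 0
      | Sum.inl _, Sum.inr j => a j
      | Sum.inr i, Sum.inl _ => c i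
      | Sum.inr i, Sum.inr j => DF0 i j)
    (DH : Matrix (Unit ⊕ Fin q) (Unit ⊕ Fin q) ℝ)
    (hDH : DH = Matrix.of fun u v =>
      match u, v with
      | Sum.inl _, Sum.inl _ => 0
      | Sum.inl _, Sum.inr j => b j
      | Sum.inr i, Sum.inl _ => d i
      | Sum.inr i, Sum.inr j => DH0 i j)
    (D : Matrix (Unit ⊕ Fin p ⊕ Fin q) (Unit ⊕ Fin p ⊕ Fin q) ℝ)
    (hD : D = Matrix.of fun u v =>
      match u, v with
      | Sum.inl _, Sum.inl _ => 0
      | Sum.inl _, Sum.inr (Sum.inl j) => a j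
      | Sum.inl _, Sum.inr (Sum.inr j) => b j
      | Sum.inr (Sum.inl i), Sum.inl _ => c i
      | Sum.inr (Sum.inl i), Sum.inr (Sum.inl j) => DF0 i j
      | Sum.inr (Sum.inl i), Sum.inr (Sum.inr j) => c i + b j
      | Sum.inr (Sum.inr i), Sum.inl _ => d i
      | Sum.inr (Sum.inr i), Sum.inr (Sum.inl j) => d i + a j
      | Sum.inr (Sum.inr i), Sum.inr (Sum.inr j) => DH0 i j)
    (αF : Unit ⊕ Fin p → ℝ) (αH : Unit ⊕ Fin q → ℝ)
    (lamF lamH : ℝ)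
    (hαF1 : (∑ u, αF u) = 1) (hαH1 : (∑ u, αH u) = 1)
    (hαF : vecMul αF DF = fun _ => lamF)
    (hαH : vecMul αH DH = fun _ => lamH)
    (α : Unit ⊕ Fin p ⊕ Fin q → ℝ)
    (hα : α = fun u =>
      match u with
      | Sum.inl _ => αF (Sum.inl ()) + αH (Sum.inl ()) - 1
      | Sum.inr (Sum.inl i) => αF (Sum.inr i)
      | Sum.inr (Sum.inr i) => αH (Sum.inr i)) :
    (∑ u, α u) = 1 ∧ vecMul α D = fun _ => lamF + lamH := by
  have hDF' : DF = borderMatrix a c DF0 := by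
    subst hDF; ext (_ | i) (_ | j) <;> rfl
  have hDH' : DH = borderMatrix b d DH0 := by
    subst hDH; ext (_ | i) (_ | j) <;> rfl
  have hD' : D = gluedMatrix a c b d DF0 DH0 := by
    subst hD; ext (_ | i | i) (_ | j | j) <;> rfl
  have hα' : α = gluedWeights αF αH := by
    subst hα; ext (_ | i | i) <;> rfl
  subst hDF' hDH' hD' hα'
  refine ⟨?_, vecMul_gluedMatrix_of_vecMul_borderMatrix _ _ _ _ _ _ _ _ hαF1 hαH1 hαF hαH⟩
  rw [sum_gluedWeights, hαF1, hαH1]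
  norm_num
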